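/- Let 0 ≤ a ≤ b and 0 ≤ r ≤ n be integers satisfying a ≤ r and b − a ≤ n − r. If M is a matroid of rank r on an n-element ground set that does not have the uniform matroid U_{a,b} as a minor, then d(M) ≥ 1/C(b,a), where d(M) is the fraction of r-element subsets of the ground set that are dependent in M. -/

import Mathlib

open Filter Set

/-- The rank of a matroid `M`: the (common) cardinality of a base of `M`. -/
noncomputable def Matroid.rkt {α : Type*} (M : Matroid α) : ℕ :=
  sSup {k | ∃ B, M.IsBase B ∧ B.ncard = k}

/-- A circuit of a matroid: a minimal dependent set. -/
def Matroid.IsCircuit' {α : Type*} (M : Matroid α) (C : Set α) : Prop :=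
  M.Dep C ∧ ∀ D, D ⊂ C → ¬ M.Dep D

/-- A hyperplane of a matroid: a maximal proper flat. -/
def Matroid.IsHyperplane {α : Type*} (M : Matroid α) (H : Set α) : Prop :=
  M.IsFlat H ∧ H ⊂ M.E ∧ ∀ F, M.IsFlat F → H ⊂ F → F = M.E

/-- A circuit-hyperplane of a matroid: a set that is both a circuit and a hyperplane. -/
def Matroid.IsCircuitHyperplane {α : Type*} (M : Matroid α) (X : Set α) : Prop :=
  M.IsCircuit' X ∧ M.IsHyperplane X

/-- `W(M)`: the set of circuit-hyperplanes of `M`. -/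
def matroidW {α : Type*} (M : Matroid α) : Set (Set α) :=
  {X | M.IsCircuitHyperplane X}

/-- `U(M)`: the dependent subsets of the ground set of cardinality `rk(M)`
that are not circuit-hyperplanes. -/
def matroidU {α : Type*} (M : Matroid α) : Set (Set α) :=
  {X | X.ncard = M.rkt ∧ M.Dep X ∧ ¬ M.IsCircuitHyperplane X}

/-- The set of matroids with ground set `{1, …, n}` (modelled as `Fin n`). -/
def matroidsOn (n : ℕ) : Set (Matroid (Fin n)) := {M | M.E = Set.univ}

/-- The set of matroids with ground set `{1, …, n}` and rank `r`. -/
def matroidsOnRank (n r : ℕ) : Set (Matroid (Fin n)) :=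
  {M | M.E = Set.univ ∧ M.rkt = r}

/-- `M` has a minor isomorphic to the uniform matroid `U_{a,b}`: there are disjoint sets
`C, D ⊆ E(M)` and a maximal independent subset `I` of `C` such that the minor obtained by
contracting `C` and deleting `D` has ground set of size `b`, and its independent sets
(the sets `X` with `X ∪ I` independent in `M`) are exactly the sets of size at most `a`. -/
def Matroid.HasUniformMinor {α : Type*} (M : Matroid α) (a b : ℕ) : Prop :=
  ∃ C D I : Set α, D ⊆ M.E ∧ Disjoint C D ∧ M.IsBasis I C ∧
    (M.E \ (C ∪ D)).ncard = b ∧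
    ∀ X ⊆ M.E \ (C ∪ D), (M.Indep (X ∪ I) ↔ X.ncard ≤ a)


/-! Double counting. Put `c = r - a` and consider the flags `T ⊆ U` with `|T| = c` and
`|U| = c + b`. Since `M` has no `U_{a,b}`-minor, every such interval `[T, U]` contains a dependent
`r`-set, while an `r`-set lies in at most `C(r, c) C(n - r, b - a)` flags. There are
`C(n, c + b) C(c + b, c)` flags, and
`C(n, c + b) C(c + b, c) C(b, a) = C(n, r) C(r, c) C(n - r, b - a)`. -/

namespace Matroid

variable {α : Type*} {M : Matroid α}

lemma IsBase.rkt_eq_ncard {B : Set α} (hB : M.IsBase B) : M.rkt = B.ncard := by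
  have hranks : {k | ∃ B, M.IsBase B ∧ B.ncard = k} = {B.ncard} := by
    ext k
    constructor
    · rintro ⟨B', hB', rfl⟩
      exact hB'.ncard_eq_ncard_of_isBase hB
    · rintro rfl
      exact ⟨B, hB, rfl⟩
  rw [rkt, hranks, csSup_singleton]

lemma Indep.ncard_le_rkt [M.RankFinite] {I : Set α} (hI : M.Indep I) : I.ncard ≤ M.rkt := by
  obtain ⟨B, hB, hIB⟩ := hI.exists_isBase_superset
  exact hB.rkt_eq_ncard ▸ Set.ncard_le_ncard hIB hB.finite

/-- If `T` is independent, `M / T \ (M.E \ U)` is a matroid of rank at most `a` on the `b`-set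
`U \ T`; not being `U_{a,b}`, it has a dependent set of size at most `a`. -/
lemma exists_dep_ncard_le_of_not_hasUniformMinor [M.RankFinite] {a b : ℕ}
    (hM : ¬ M.HasUniformMinor a b) {T U : Set α} (hTU : T ⊆ U) (hUE : U ⊆ M.E)
    (hT : T.ncard + a = M.rkt) (hU : (U \ T).ncard = b) :
    ∃ W, T ⊆ W ∧ W ⊆ U ∧ W.ncard ≤ M.rkt ∧ M.Dep W := by
  by_cases hTi : M.Indep T
  swap
  · exact ⟨T, subset_rfl, hTU, by omega, ⟨hTi, hTU.trans hUE⟩⟩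
  have hminor : M.E \ (T ∪ M.E \ U) = U \ T := by
    ext x
    have := @hUE x
    simp only [Set.mem_sdiff, Set.mem_union]
    tauto
  have hnot : ¬ ∀ X ⊆ U \ T, (M.Indep (X ∪ T) ↔ X.ncard ≤ a) := fun hall =>
    hM ⟨T, M.E \ U, T, Set.sdiff_subset, Set.disjoint_sdiff_right.mono_left hTU,
      hTi.isBasis_self, hminor ▸ hU, hminor ▸ hall⟩
  push Not at hnot
  obtain ⟨X, hXU, ⟨hXi, hXa⟩ | ⟨hXd, hXa⟩⟩ := hnot
  · have hdisj : Disjoint X T := (Set.subset_sdiff.1 hXU).2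
    have hle := hXi.ncard_le_rkt
    rw [Set.ncard_union_eq hdisj (hXi.finite.subset Set.subset_union_left)
      (hXi.finite.subset Set.subset_union_right)] at hle
    omega
  · have hXTU : X ∪ T ⊆ U := Set.union_subset (hXU.trans Set.sdiff_subset) hTU
    exact ⟨X ∪ T, Set.subset_union_right, hXTU, (Set.ncard_union_le X T).trans (by omega),
      ⟨hXd, hXTU.trans hUE⟩⟩

lemma exists_dep_ncard_eq_of_not_hasUniformMinor [M.RankFinite] {a b : ℕ} (hab : a ≤ b)
    (hM : ¬ M.HasUniformMinor a b) {T U : Set α} (hTU : T ⊆ U) (hUE : U ⊆ M.E)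
    (hUfin : U.Finite) (hT : T.ncard + a = M.rkt) (hU : (U \ T).ncard = b) :
    ∃ Z, T ⊆ Z ∧ Z ⊆ U ∧ Z.ncard = M.rkt ∧ M.Dep Z := by
  obtain ⟨W, hTW, hWU, hW, hWdep⟩ :=
    M.exists_dep_ncard_le_of_not_hasUniformMinor hM hTU hUE hT hU
  have hrkU : M.rkt ≤ U.ncard := by
    rw [← Set.ncard_sdiff_add_ncard_of_subset hTU hUfin]
    omega
  obtain ⟨Z, hWZ, hZU, hZ⟩ := Set.exists_subsuperset_card_eq hWU hW hrkU
  exact ⟨Z, hTW.trans hWZ, hZU, hZ, hWdep.superset hWZ (hZU.trans hUE)⟩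

end Matroid

/-- Both sides are the multinomial coefficient `n! / (c! (r - c)! (m - r)! (n - m)!)`. -/
lemma Nat.choose_mul_choose_mul_choose_eq {n m r c : ℕ} (hcr : c ≤ r) (hrm : r ≤ m) :
    n.choose m * m.choose c * (m - c).choose (r - c) =
      n.choose r * r.choose c * (n - r).choose (m - r) := by
  rw [Nat.choose_mul (hcr.trans hrm), Nat.choose_mul hcr, mul_assoc, mul_assoc,
    Nat.choose_mul (Nat.sub_le_sub_right hrm c), show n - c - (r - c) = n - r by omega,
    show m - c - (r - c) = m - r by omega]

namespace Finset

variable {α : Type*} [Fintype α]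

def MeetsIntervals (𝒟 : Finset (Finset α)) (c m : ℕ) : Prop :=
  ∀ T U : Finset α, T ⊆ U → #T = c → #U = m → ∃ Z ∈ 𝒟, T ⊆ Z ∧ Z ⊆ U

variable (α) in
/-- Flags `T ⊆ U` with `#T = c` and `#U = m`, stored as `⟨U, T⟩`. -/
def flags (c m : ℕ) : Finset (Σ _ : Finset α, Finset α) :=
  (univ.powersetCard m).sigma fun U => U.powersetCard c

lemma card_flags (c m : ℕ) : #(flags α c m) = (Fintype.card α).choose m * m.choose c := by
  rw [flags, card_sigma, sum_const_nat fun U hU => by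
    rw [card_powersetCard, (mem_powersetCard.1 hU).2], card_powersetCard, card_univ]

variable [DecidableEq α]

lemma card_flags_around_le {Z : Finset α} {r : ℕ} (hZ : #Z = r) (c m : ℕ) :
    #{p ∈ flags α c m | p.2 ⊆ Z ∧ Z ⊆ p.1} ≤ r.choose c * (Fintype.card α - r).choose (m - r) := by
  calc #{p ∈ flags α c m | p.2 ⊆ Z ∧ Z ⊆ p.1}
      ≤ #(Z.powersetCard c ×ˢ (univ \ Z).powersetCard (m - r)) := by
        refine card_le_card_of_injOn (fun p => (p.2, p.1 \ Z)) (fun p hp => ?_) ?_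
        · obtain ⟨hp, hTZ, hZU⟩ := mem_filter.1 hp
          obtain ⟨⟨-, hU⟩, -, hT⟩ := by simpa only [flags, mem_sigma, mem_powersetCard] using hp
          simp only [coe_product, Set.mem_prod, mem_coe, mem_powersetCard]
          refine ⟨⟨hTZ, hT⟩, sdiff_subset_sdiff (subset_univ _) subset_rfl, ?_⟩
          rw [card_sdiff_of_subset hZU, hU, hZ]
        · rintro ⟨U, T⟩ hp ⟨U', T'⟩ hp' heq
          simp only [Prod.mk.injEq] at heq
          obtain ⟨rfl, hUU'⟩ := heq
          have hZU : Z ⊆ U := (mem_filter.1 hp).2.2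
          have hZU' : Z ⊆ U' := (mem_filter.1 hp').2.2
          rw [← sdiff_union_of_subset hZU, ← sdiff_union_of_subset hZU', hUU']
      _ = r.choose c * (Fintype.card α - r).choose (m - r) := by
        rw [card_product, card_powersetCard, card_powersetCard,
          card_sdiff_of_subset (subset_univ Z), card_univ, hZ]

theorem choose_mul_choose_le_card_mul_of_meetsIntervals {𝒟 : Finset (Finset α)} {r c m : ℕ}
    (h𝒟 : ∀ Z ∈ 𝒟, #Z = r) (hmeet : MeetsIntervals 𝒟 c m) :
    (Fintype.card α).choose m * m.choose c ≤
      #𝒟 * (r.choose c * (Fintype.card α - r).choose (m - r)) := by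
  rw [← card_flags, ← mul_one #(flags α c m)]
  refine card_mul_le_card_mul (fun (p : Σ _ : Finset α, Finset α) Z => p.2 ⊆ Z ∧ Z ⊆ p.1)
    (fun p hp => ?_) fun Z hZ => card_flags_around_le (h𝒟 Z hZ) c m
  obtain ⟨⟨-, hU⟩, hTU, hT⟩ := by simpa only [flags, mem_sigma, mem_powersetCard] using hp
  obtain ⟨Z, hZ, hTZ, hZU⟩ := hmeet p.2 p.1 hTU hT hU
  exact one_le_card.2 ⟨Z, mem_filter.2 ⟨hZ, hTZ, hZU⟩⟩

theorem choose_le_card_mul_choose_of_meetsIntervals {𝒟 : Finset (Finset α)} {a b r : ℕ}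
    (hab : a ≤ b) (har : a ≤ r) (hba : b - a ≤ Fintype.card α - r) (h𝒟 : ∀ Z ∈ 𝒟, #Z = r)
    (hmeet : MeetsIntervals 𝒟 (r - a) (r - a + b)) :
    (Fintype.card α).choose r ≤ #𝒟 * b.choose a := by
  have hcount := choose_mul_choose_le_card_mul_of_meetsIntervals h𝒟 hmeet
  have hid := Nat.choose_mul_choose_mul_choose_eq (n := Fintype.card α) (Nat.sub_le r a)
    (show r ≤ r - a + b by omega)
  rw [show r - a + b - (r - a) = b by omega, show r - (r - a) = a by omega] at hid
  set K := r.choose (r - a) * (Fintype.card α - r).choose (r - a + b - r)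
  have hK : 0 < K := Nat.mul_pos (Nat.choose_pos (Nat.sub_le r a)) (Nat.choose_pos (by omega))
  refine Nat.le_of_mul_le_mul_right ?_ hK
  calc (Fintype.card α).choose r * K
      = (Fintype.card α).choose (r - a + b) * (r - a + b).choose (r - a) * b.choose a := by
        rw [← mul_assoc, ← hid]
    _ ≤ #𝒟 * K * b.choose a := Nat.mul_le_mul_right _ hcount
    _ = #𝒟 * b.choose a * K := by ring

end Finset

lemma Set.ncard_setOf_eq_card_filter {α : Type*} [Fintype α] (p : Set α → Prop)
    [DecidablePred fun Z : Finset α => p Z] :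
    {X : Set α | p X}.ncard = (Finset.univ.filter fun Z : Finset α => p Z).card := by
  have himage : {X : Set α | p X} = (fun Z : Finset α => (Z : Set α)) ''
      ((Finset.univ.filter fun Z : Finset α => p Z : Finset (Finset α)) : Set (Finset α)) := by
    ext X
    simpa using ⟨fun hX => ⟨X.toFinite.toFinset, by simpa using hX, by simp⟩,
      by rintro ⟨Z, hZ, rfl⟩; exact hZ⟩
  rw [himage, Set.ncard_image_of_injective _ Finset.coe_injective, Set.ncard_coe_finset]

open Finset

/-- Let `0 ≤ a ≤ b` and `0 ≤ r ≤ n` with `a ≤ r` and `b − a ≤ n − r`.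
If `M` is a matroid of rank `r` on an `n`-element ground set without a `U_{a,b}`-minor,
then `d(M) ≥ 1/C(b,a)`. -/
theorem dep_fraction_of_no_uniform_minor {α : Type*} [Fintype α] (M : Matroid α)
    {a b r n : ℕ} (hab : a ≤ b) (hrn : r ≤ n) (har : a ≤ r) (hba : b - a ≤ n - r)
    (hn : Fintype.card α = n) (hE : M.E = Set.univ) (hr : M.rkt = r)
    (hminor : ¬ M.HasUniformMinor a b) :
    (1 : ℝ) / ((b.choose a : ℝ)) ≤
      (({X : Set α | X.ncard = r ∧ M.Dep X}).ncard : ℝ) / ((n.choose r : ℝ)) := by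
  classical
  subst hn
  rw [Set.ncard_setOf_eq_card_filter]
  set 𝒟 := univ.filter fun Z : Finset α => (Z : Set α).ncard = r ∧ M.Dep Z
  have hmeet : 𝒟.MeetsIntervals (r - a) (r - a + b) := by
    intro T U hTU hT hU
    obtain ⟨Z, hTZ, hZU, hZ, hZdep⟩ := M.exists_dep_ncard_eq_of_not_hasUniformMinor hab hminor
      (coe_subset.2 hTU) (hE ▸ Set.subset_univ _) U.finite_toSet
      (by rw [Set.ncard_coe_finset]; omega)
      (by rw [← coe_sdiff, Set.ncard_coe_finset, card_sdiff_of_subset hTU]; omega)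
    lift Z to Finset α using Z.toFinite
    exact ⟨Z, mem_filter.2 ⟨mem_univ Z, hZ.trans hr, hZdep⟩, coe_subset.1 hTZ, coe_subset.1 hZU⟩
  have hkey := choose_le_card_mul_choose_of_meetsIntervals hab har hba
    (fun Z hZ => Set.ncard_coe_finset Z ▸ (mem_filter.1 hZ).2.1) hmeet
  rw [div_le_div_iff₀ (by exact_mod_cast Nat.choose_pos hab)
    (by exact_mod_cast Nat.choose_pos hrn), one_mul]
  exact_mod_cast hkey
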